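/- If $X_1(t) = (\cos t, \sin t)$, $X_2(t) = -r_2(\cos t, \sin t)$, $X_3(t) = -r_3(\cos t, \sin t)$ with $0 < r_2 < r_3$ satisfy the Newtonian 3-body equations $\ddot{X}_i = \sum_{j \neq i} m_j (X_j - X_i)/|X_j - X_i|^3$ (with gravitational constant $1$), then $\frac{m_2}{(r_2+1)^2} + \frac{m_3 - (r_3+1)^2}{(r_3+1)^2} = 0$. -/

import Mathlib

open Real

private noncomputable def v2 (a b : ℝ) : EuclideanSpace ℝ (Fin 2) := WithLp.toLp 2 ![a, b]

private lemma curve_hasDerivAt (f g f' g' : ℝ → ℝ) (t : ℝ)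
    (hf : HasDerivAt f (f' t) t) (hg : HasDerivAt g (g' t) t) :
    HasDerivAt (fun t => v2 (f t) (g t)) (v2 (f' t) (g' t)) t := by
  have hpi : HasDerivAt (fun t => (![f t, g t] : Fin 2 → ℝ)) (![f' t, g' t]) t := by
    rw [hasDerivAt_pi]
    intro i
    fin_cases i <;> simpa using (by assumption : _)
  have := ((PiLp.continuousLinearEquiv 2 ℝ (fun _ : Fin 2 => ℝ)).symm.toContinuousLinearMap.hasFDerivAt).comp_hasDerivAt t hpi
  exact this

private lemma norm_v2 (a : ℝ) : ‖v2 a 0‖ = |a| := by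
  rw [EuclideanSpace.norm_eq]
  simp [v2, Fin.sum_univ_two, Real.sqrt_sq_eq_abs]

/-- If the rotating collinear configuration satisfies the Newtonian
3-body equations, then `m2/(r2+1)^2 + (m3-(r3+1)^2)/(r3+1)^2 = 0`. -/
theorem euler_collinear_eq1 (r2 r3 m1 m2 m3 : ℝ) (h2 : 0 < r2) (h23 : r2 < r3)
    (hm1 : 0 < m1) (hm2 : 0 < m2) (hm3 : 0 < m3)
    (X1 X2 X3 : ℝ → EuclideanSpace ℝ (Fin 2))
    (hX1 : ∀ t, X1 t = ![Real.cos t, Real.sin t])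
    (hX2 : ∀ t, X2 t = (-r2) • (WithLp.toLp 2 ![Real.cos t, Real.sin t] : EuclideanSpace ℝ (Fin 2)))
    (hX3 : ∀ t, X3 t = (-r3) • (WithLp.toLp 2 ![Real.cos t, Real.sin t] : EuclideanSpace ℝ (Fin 2)))
    (heq1 : ∀ t, deriv (deriv X1) t =
      (m2 / ‖X2 t - X1 t‖ ^ 3) • (X2 t - X1 t) + (m3 / ‖X3 t - X1 t‖ ^ 3) • (X3 t - X1 t))
    (heq2 : ∀ t, deriv (deriv X2) t =
      (m1 / ‖X1 t - X2 t‖ ^ 3) • (X1 t - X2 t) + (m3 / ‖X3 t - X2 t‖ ^ 3) • (X3 t - X2 t))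
    (heq3 : ∀ t, deriv (deriv X3) t =
      (m1 / ‖X1 t - X3 t‖ ^ 3) • (X1 t - X3 t) + (m2 / ‖X2 t - X3 t‖ ^ 3) • (X2 t - X3 t)) :
    m2 / (r2 + 1) ^ 2 + (m3 - (r3 + 1) ^ 2) / (r3 + 1) ^ 2 = 0 := by
  have hX1' : X1 = fun t => v2 (Real.cos t) (Real.sin t) := by
    funext t; rw [v2, ← hX1]
  have hd1 : deriv X1 = fun t => v2 (-Real.sin t) (Real.cos t) := by
    funext t
    rw [hX1']
    exact (curve_hasDerivAt _ _ (fun t => -Real.sin t) (fun t => Real.cos t) t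
      (Real.hasDerivAt_cos t) (Real.hasDerivAt_sin t)).deriv
  have hdd1 : deriv (deriv X1) 0 = v2 (-1) 0 := by
    rw [hd1, (curve_hasDerivAt (fun t => -Real.sin t) (fun t => Real.cos t) (fun t => -Real.cos t) (fun t => -Real.sin t) 0
      ((Real.hasDerivAt_sin 0).neg) (Real.hasDerivAt_cos 0)).deriv]
    norm_num
  have key := heq1 0
  rw [hdd1, show X1 0 = WithLp.toLp 2 ![Real.cos 0, Real.sin 0] from congrArg (WithLp.toLp 2) (hX1 0), hX2 0, hX3 0] at key
  have hsub2 : ((-r2) • (WithLp.toLp 2 ![Real.cos 0, Real.sin 0] : EuclideanSpace ℝ (Fin 2)) -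
      WithLp.toLp 2 ![Real.cos 0, Real.sin 0]) = v2 (-(r2+1)) 0 := by
    ext i
    fin_cases i <;> simp [v2, PiLp.sub_apply, PiLp.smul_apply] <;> ring
  have hsub3 : ((-r3) • (WithLp.toLp 2 ![Real.cos 0, Real.sin 0] : EuclideanSpace ℝ (Fin 2)) -
      WithLp.toLp 2 ![Real.cos 0, Real.sin 0]) = v2 (-(r3+1)) 0 := by
    ext i
    fin_cases i <;> simp [v2, PiLp.sub_apply, PiLp.smul_apply] <;> ring
  rw [hsub2, hsub3, norm_v2, norm_v2] at key
  rw [abs_of_nonpos (by linarith), abs_of_nonpos (by linarith)] at key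
  have key0 := congrFun (congrArg WithLp.ofLp key) 0
  simp only [v2, PiLp.add_apply, PiLp.smul_apply, Matrix.cons_val_zero, smul_eq_mul] at key0
  have h2' : (0:ℝ) < r2 + 1 := by linarith
  have h3' : (0:ℝ) < r3 + 1 := by linarith
  have hA : (r2 + 1) ≠ 0 := ne_of_gt h2'
  have hB : (r3 + 1) ≠ 0 := ne_of_gt h3'
  field_simp at key0
  have hfin : (m2 * (r3+1)^2 + (m3 - (r3+1)^2) * (r2+1)^2) * ((r2+1)*(r3+1)) = 0 := by
    first
    | linear_combination key0
    | linear_combination ((r2+1)*(r3+1)) * key0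
  have hzero := (mul_eq_zero.mp hfin).resolve_right (mul_ne_zero hA hB)
  rw [div_add_div _ _ (pow_ne_zero 2 hA) (pow_ne_zero 2 hB), div_eq_zero_iff]
  left
  linear_combination hzero
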